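/- arXiv:1809.08019 — 4 statements merged into one kernel-verified Lean document; each statement's English description precedes it below -/
import Mathlib

section
/- Uniform exponential moment bound for the M/D/1 queue: if ρ < 1, there exist λ_ρ > 0 and C_ρ > 0 depending only on ρ such that for all λ ∈ (0, λ_ρ] and all starting states ζ ∈ ℤ₊ and all times t, E_ζ[e^{λ ζ(t)}] ≤ C_ρ e^{λζ}. -/
open MeasureTheory ProbabilityTheory
open scoped ENNReal
set_option maxHeartbeats 1000000

lemma real_exp_tsum (x : ℝ) : Real.exp x = ∑' n : ℕ, x ^ n / n.factorial := by
  rw [Real.exp_eq_exp_ℝ, NormedSpace.exp_eq_tsum_div]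

lemma poisson_mgf {Ω : Type} [MeasurableSpace Ω] (μ : Measure Ω)
    (M : Ω → ℕ) (hM : Measurable M) (ρ lam : ℝ) (hρ : 0 ≤ ρ)
    (hpmf : ∀ k : ℕ, μ {ω | M ω = k}
      = ENNReal.ofReal (Real.exp (-ρ) * ρ ^ k / (Nat.factorial k))) :
    ∫⁻ ω, ENNReal.ofReal (Real.exp (lam * M ω)) ∂μ
      = ENNReal.ofReal (Real.exp (ρ * (Real.exp lam - 1))) := by
  have h1 : ∫⁻ ω, ENNReal.ofReal (Real.exp (lam * M ω)) ∂μ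
      = ∫⁻ k : ℕ, ENNReal.ofReal (Real.exp (lam * k)) ∂(μ.map M) :=
    (lintegral_map (f := fun k : ℕ => ENNReal.ofReal (Real.exp (lam * k))) measurable_from_nat hM).symm
  rw [h1, lintegral_countable']
  have h2 : ∀ k : ℕ, (μ.map M) {k} = ENNReal.ofReal (Real.exp (-ρ) * ρ ^ k / k.factorial) := by
    intro k
    rw [Measure.map_apply hM (measurableSet_singleton k)]
    exact hpmf k
  have h3 : ∀ k : ℕ, ENNReal.ofReal (Real.exp (lam * k)) * (μ.map M) {k}
      = ENNReal.ofReal (Real.exp (-ρ) * ((ρ * Real.exp lam) ^ k / k.factorial)) := by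
    intro k
    rw [h2 k, ← ENNReal.ofReal_mul (Real.exp_nonneg _)]
    congr 1
    have : Real.exp (lam * k) = (Real.exp lam) ^ k := by
      rw [mul_comm, Real.exp_nat_mul]
    rw [this, mul_pow]
    field_simp
  simp_rw [h3]
  rw [← ENNReal.ofReal_tsum_of_nonneg]
  · congr 1
    rw [tsum_mul_left, ← real_exp_tsum, ← Real.exp_add]
    ring_nf
  · intro k
    positivity
  · exact (Real.summable_pow_div_factorial _).mul_left _

/-- Uniform exponential moment bound for the M/D/1 queue with arrival rate
`ρ < 1`: there exist `λ_ρ > 0` and `C_ρ > 0`, depending only on `ρ`, such that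
for every version of the queue started from any state `ζ0` and every
`λ ∈ (0, λ_ρ]`, `E_{ζ0}[e^{λ ζ(t)}] ≤ C_ρ e^{λ ζ0}` for all times `t`. -/
theorem md1_uniform_exp_moment (ρ : ℝ) (hρ0 : 0 ≤ ρ) (hρ1 : ρ < 1) :
    ∃ lam_rho > (0 : ℝ), ∃ C > (0 : ℝ),
      ∀ (Ω : Type) (_ : MeasureSpace Ω) (μ : Measure Ω) (_ : IsProbabilityMeasure μ)
        (Z M : ℕ → Ω → ℕ) (ζ0 : ℕ),
        (∀ t, Measurable (Z t)) → (∀ t, Measurable (M t)) →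
        (∀ ω, Z 0 ω = ζ0) →
        (∀ t ω, Z (t + 1) ω = Z t ω - (if 0 < Z t ω then 1 else 0) + M (t + 1) ω) →
        (∀ t, ∀ k : ℕ,
          μ {ω | M (t + 1) ω = k}
            = ENNReal.ofReal (Real.exp (-ρ) * ρ ^ k / (Nat.factorial k))) →
        (∀ t, IndepFun (Z t) (M (t + 1)) μ) →
        ∀ lam : ℝ, 0 < lam → lam ≤ lam_rho → ∀ t : ℕ,
          ∫⁻ ω, ENNReal.ofReal (Real.exp (lam * Z t ω)) ∂μ
            ≤ ENNReal.ofReal (C * Real.exp (lam * ζ0)) := by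
  have h1ρ : 0 < 1 - ρ := by linarith
  set e1 := Real.exp 1 with he1def
  have he1 : 2 ≤ e1 := by
    have := Real.exp_one_gt_d9; rw [he1def]; linarith
  have he1pos : 0 < e1 := by linarith
  set c : ℝ := (1 - ρ)/2 with hcdef
  have hc0 : 0 < c := by positivity
  have hchalf : c ≤ 1/2 := by rw [hcdef]; linarith
  set B : ℝ := e1^2/c with hBdef
  have hB0 : 0 < B := by positivity
  refine ⟨(1 - ρ)/4, by linarith, 1 + B, by positivity, ?_⟩
  intro Ω _ μ _ Z M ζ0 hZ hM hZ0 hrec hpmf hind lam hlam0 hlamc t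
  have hlamc2 : lam ≤ c/2 := by rw [hcdef]; linarith
  have hlam1 : lam ≤ 1/4 := by linarith
  set A : ℝ := Real.exp (lam * ζ0) with hAdef
  have hA1 : 1 ≤ A := Real.one_le_exp (by positivity)
  -- real exp bound : exp lam ≤ 1 + lam + 2 lam^2
  have hexplam : Real.exp lam ≤ 1 + lam + 2*lam^2 := by
    have h1 : 1 - lam ≤ Real.exp (-lam) := by
      have := Real.add_one_le_exp (-lam); linarith
    have h2 : Real.exp lam * Real.exp (-lam) = 1 := by
      rw [← Real.exp_add]; simp
    have h3 : Real.exp lam * (1 - lam) ≤ 1 := by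
      nlinarith [Real.exp_pos lam]
    nlinarith [Real.exp_pos lam]
  -- drift exponent bound
  have h4 : ρ * (Real.exp lam - 1) ≤ lam * (1 - c) := by
    have : 1 - c = ρ + c := by rw [hcdef]; ring
    rw [this]
    nlinarith
  set θ : ℝ := Real.exp (-(c*lam)) with hθdef
  have hθ1 : θ ≤ 1 := by
    rw [hθdef, Real.exp_le_one_iff]; nlinarith
  have hθpos : 0 < θ := Real.exp_pos _
  set φ : ℝ := Real.exp (ρ * (Real.exp lam - 1)) with hφdef
  have hφpos : 0 < φ := Real.exp_pos _
  have hφe : φ ≤ e1 := by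
    rw [hφdef, he1def]
    exact Real.exp_le_exp.mpr (by nlinarith)
  have hθ' : φ * Real.exp (-lam) ≤ θ := by
    rw [hφdef, hθdef, ← Real.exp_add]
    exact Real.exp_le_exp.mpr (by nlinarith)
  -- 1 - θ ≥ c*lam/e1, hence θ*B + e1*lam ≤ B
  have hBiii : θ * B + e1 * lam ≤ B := by
    have hx1 : c * lam ≤ 1 := by nlinarith
    have hex : 1 + c*lam ≤ Real.exp (c*lam) := by
      have := Real.add_one_le_exp (c*lam); linarith
    have hmul : θ * Real.exp (c*lam) = 1 := by
      rw [hθdef, ← Real.exp_add]; simp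
    have h1θ : c*lam/e1 ≤ 1 - θ := by
      have hθle : θ * (1 + c*lam) ≤ 1 := by nlinarith
      have h2' : θ ≤ 1/(1 + c*lam) := by
        rw [le_div_iff₀ (by nlinarith)]; linarith
      have h3' : 1/(1+c*lam) ≤ 1 - c*lam/2 := by
        rw [div_le_iff₀ (by nlinarith)]
        nlinarith [mul_nonneg (mul_pos hc0 hlam0).le (by linarith : (0:ℝ) ≤ 1 - c*lam)]
      have : c*lam/e1 ≤ c*lam/2 := by
        apply div_le_div_of_nonneg_left (by nlinarith) (by norm_num) he1
      linarith
    have : e1 * lam ≤ (1 - θ) * B := by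
      have : (c*lam/e1) * B = e1 * lam := by
        rw [hBdef]; field_simp
      nlinarith [mul_le_mul_of_nonneg_right h1θ hB0.le]
    linarith
  -- key real step inequality
  have hstep : (Real.exp (-lam) * (A + B) + lam) * φ ≤ A + B := by
    have t1 : φ * Real.exp (-lam) * A ≤ θ * A :=
      mul_le_mul_of_nonneg_right hθ' (by linarith)
    have t2 : φ * Real.exp (-lam) * B ≤ θ * B :=
      mul_le_mul_of_nonneg_right hθ' hB0.le
    have t3 : φ * lam ≤ e1 * lam :=
      mul_le_mul_of_nonneg_right hφe hlam0.le
    have t4 : θ * A ≤ A := by nlinarith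
    nlinarith
  -- the main induction
  have key : ∀ s : ℕ, ∫⁻ ω, ENNReal.ofReal (Real.exp (lam * Z s ω)) ∂μ
      ≤ ENNReal.ofReal (A + B) := by
    intro s
    induction s with
    | zero =>
      have hcongr : ∀ ω, ENNReal.ofReal (Real.exp (lam * Z 0 ω)) = ENNReal.ofReal A :=
        fun ω => by rw [hZ0 ω]
      rw [lintegral_congr hcongr, lintegral_const, measure_univ, mul_one]
      exact ENNReal.ofReal_le_ofReal (by linarith)
    | succ s ih =>
      set F : ℕ → ℝ≥0∞ := fun k =>
        ENNReal.ofReal (Real.exp (lam * ((k:ℝ) - if 0 < k then 1 else 0))) with hFdef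
      set G : ℕ → ℝ≥0∞ := fun m => ENNReal.ofReal (Real.exp (lam * m)) with hGdef
      have hpt : ∀ ω, ENNReal.ofReal (Real.exp (lam * Z (s+1) ω))
          = ((fun ω => F (Z s ω)) * (fun ω => G (M (s+1) ω))) ω := by
        intro ω
        have hsub : (if 0 < Z s ω then 1 else 0) ≤ Z s ω := by split <;> omega
        show _ = F (Z s ω) * G (M (s+1) ω)
        rw [hFdef, hGdef]
        simp only
        rw [← ENNReal.ofReal_mul (Real.exp_nonneg _), ← Real.exp_add]
        congr 2
        rw [hrec s ω]
        rcases Nat.eq_zero_or_pos (Z s ω) with h0 | h0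
        · simp [h0]
        · rw [if_pos h0]
          have : ((Z s ω - 1 + M (s+1) ω : ℕ) : ℝ)
              = (Z s ω : ℝ) - 1 + (M (s+1) ω : ℝ) := by
            have : 1 ≤ Z s ω := h0
            push_cast [this]; ring
          rw [if_pos h0] at *
          rw [this]; push_cast; ring
      have hGint : ∫⁻ ω, G (M (s+1) ω) ∂μ = ENNReal.ofReal φ := by
        rw [hGdef, hφdef]
        exact poisson_mgf μ (M (s+1)) (hM (s+1)) ρ lam hρ0 (hpmf s)
      have hFle : ∀ ω, F (Z s ω)
          ≤ ENNReal.ofReal (Real.exp (-lam)) * ENNReal.ofReal (Real.exp (lam * Z s ω))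
            + ENNReal.ofReal lam := by
        intro ω
        have hreal : Real.exp (lam * ((Z s ω : ℝ) - if 0 < Z s ω then 1 else 0))
            ≤ Real.exp (-lam) * Real.exp (lam * Z s ω) + lam := by
          rcases Nat.eq_zero_or_pos (Z s ω) with h0 | h0
          · simp only [h0]
            norm_num
            nlinarith [Real.add_one_le_exp (-lam)]
          · rw [if_pos h0, ← Real.exp_add]
            have : lam * ((Z s ω : ℝ) - 1) = -lam + lam * Z s ω := by ring
            rw [this]
            linarith
        calc F (Z s ω) ≤ ENNReal.ofReal (Real.exp (-lam) * Real.exp (lam * Z s ω) + lam) :=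
              ENNReal.ofReal_le_ofReal hreal
          _ = ENNReal.ofReal (Real.exp (-lam)) * ENNReal.ofReal (Real.exp (lam * Z s ω))
              + ENNReal.ofReal lam := by
            rw [ENNReal.ofReal_add (by positivity) hlam0.le,
              ENNReal.ofReal_mul (Real.exp_nonneg _)]
      have hmeasZexp : Measurable fun ω => ENNReal.ofReal (Real.exp (lam * Z s ω)) :=
        (measurable_from_nat (f := fun k : ℕ => ENNReal.ofReal (Real.exp (lam * k)))).comp (hZ s)
      have hFint : ∫⁻ ω, F (Z s ω) ∂μ
          ≤ ENNReal.ofReal (Real.exp (-lam)) * ENNReal.ofReal (A + B) + ENNReal.ofReal lam := by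
        calc ∫⁻ ω, F (Z s ω) ∂μ
            ≤ ∫⁻ ω, (ENNReal.ofReal (Real.exp (-lam))
                * ENNReal.ofReal (Real.exp (lam * Z s ω)) + ENNReal.ofReal lam) ∂μ :=
              lintegral_mono hFle
          _ = ENNReal.ofReal (Real.exp (-lam))
                * (∫⁻ ω, ENNReal.ofReal (Real.exp (lam * Z s ω)) ∂μ) + ENNReal.ofReal lam := by
              rw [lintegral_add_right _ measurable_const, lintegral_const_mul _ hmeasZexp,
                lintegral_const, measure_univ, mul_one]
          _ ≤ ENNReal.ofReal (Real.exp (-lam)) * ENNReal.ofReal (A + B) + ENNReal.ofReal lam := by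
              gcongr
      calc ∫⁻ ω, ENNReal.ofReal (Real.exp (lam * Z (s+1) ω)) ∂μ
          = ∫⁻ ω, ((fun ω => F (Z s ω)) * (fun ω => G (M (s+1) ω))) ω ∂μ :=
            lintegral_congr hpt
        _ = (∫⁻ ω, F (Z s ω) ∂μ) * ∫⁻ ω, G (M (s+1) ω) ∂μ := by
            have hFmeas : Measurable fun ω => F (Z s ω) :=
              (measurable_from_nat (f := F)).comp (hZ s)
            have hGmeas : Measurable fun ω => G (M (s+1) ω) :=
              (measurable_from_nat (f := G)).comp (hM (s+1))
            have hindFG : IndepFun (fun ω => F (Z s ω)) (fun ω => G (M (s+1) ω)) μ :=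
              (hind s).comp (measurable_from_nat (f := F)) (measurable_from_nat (f := G))
            exact lintegral_mul_eq_lintegral_mul_lintegral_of_indepFun hFmeas hGmeas hindFG
        _ ≤ (ENNReal.ofReal (Real.exp (-lam)) * ENNReal.ofReal (A + B) + ENNReal.ofReal lam)
              * ENNReal.ofReal φ := by
            rw [hGint]; gcongr
        _ = ENNReal.ofReal ((Real.exp (-lam) * (A + B) + lam) * φ) := by
            rw [← ENNReal.ofReal_mul (Real.exp_nonneg _),
              ← ENNReal.ofReal_add (by positivity) hlam0.le,
              ← ENNReal.ofReal_mul (by positivity)]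
        _ ≤ ENNReal.ofReal (A + B) := ENNReal.ofReal_le_ofReal hstep
  calc ∫⁻ ω, ENNReal.ofReal (Real.exp (lam * Z t ω)) ∂μ ≤ ENNReal.ofReal (A + B) := key t
    _ ≤ ENNReal.ofReal ((1 + B) * Real.exp (lam * ζ0)) := by
        apply ENNReal.ofReal_le_ofReal
        rw [← hAdef]
        nlinarith
end

section
/- Fixed point characterization via characteristic functions: if a ℤ₊-valued random variable η̄ with ρ̄ := P(η̄ > 0) satisfies E[e^{ixη̄}] = exp{ρ̄(e^{ix} − 1)} · E[e^{ix(η̄ − 1{η̄>0})}] for all x ∈ ℝ, then E[e^{ixη̄}] = (1−ρ̄)(e^{ix}−1) exp{ρ̄(e^{ix}−1)} / (e^{ix} − exp{ρ̄(e^{ix}−1)}) whenever the denominator is nonzero. -/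
/-!
Off the event `{η̄ = 0}` the variable `η̄ - 1{η̄>0}` is `η̄ - 1`, and on it it vanishes, so
`E[e^{ix(η̄ - 1{η̄>0})}] = e^{-ix} φ(x) + (1 - e^{-ix})(1 - ρ̄)` with `φ` the characteristic
function of `η̄`. The fixed-point equation is therefore linear in `φ(x)`, and solving it gives
the formula whenever `e^{ix} ≠ exp{ρ̄(e^{ix} - 1)}`.
-/

open MeasureTheory Complex

lemma integrable_exp_I_mul_ofReal {Ω : Type*} [MeasurableSpace Ω] (μ : Measure Ω)
    [IsFiniteMeasure μ] {f : Ω → ℝ} (hf : AEMeasurable f μ) (x : ℝ) :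
    Integrable (fun ω => exp (I * x * f ω)) μ := by
  refine (integrable_const (1 : ℝ)).mono' (by fun_prop) (.of_forall fun ω => ?_)
  rw [mul_assoc, ← ofReal_mul, norm_exp_I_mul_ofReal]

lemma exp_mul_sub_ite_pos (z : ℂ) (n : ℕ) :
    exp (z * ((n : ℂ) - if 0 < n then 1 else 0))
      = exp (-z) * exp (z * n) + (1 - exp (-z)) * if 0 < n then 0 else 1 := by
  rcases n.eq_zero_or_pos with rfl | hn
  · simp
  · simp [hn, ← exp_add]
    ring_nf

lemma integral_exp_I_mul_sub_ite_pos {Ω : Type*} [MeasurableSpace Ω] (μ : Measure Ω)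
    [IsProbabilityMeasure μ] {η : Ω → ℕ} (hη : Measurable η) (x : ℝ) :
    ∫ ω, exp (I * x * ((η ω : ℂ) - if 0 < η ω then 1 else 0)) ∂μ
      = exp (-(I * x)) * ∫ ω, exp (I * x * η ω) ∂μ
        + (1 - exp (-(I * x))) * (1 - μ.real {ω | 0 < η ω}) := by
  have hs : MeasurableSet {ω | 0 < η ω} := measurableSet_lt measurable_const hη
  have hint : Integrable (fun ω => exp (I * x * η ω)) μ := by
    simpa using integrable_exp_I_mul_ofReal μ (f := fun ω => (η ω : ℝ)) (by fun_prop) x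
  have hind : ∀ ω, (if 0 < η ω then (0 : ℂ) else 1) = {ω | 0 < η ω}ᶜ.indicator (fun _ => 1) ω := by
    intro ω; by_cases h : 0 < η ω <;> simp [h]
  simp_rw [exp_mul_sub_ite_pos, hind]
  rw [integral_add (hint.const_mul _) (((integrable_const 1).indicator hs.compl).const_mul _),
    integral_const_mul, integral_const_mul, integral_indicator_const _ hs.compl,
    probReal_compl_eq_one_sub hs, real_smul, mul_one, ofReal_sub, ofReal_one]

lemma eq_div_of_eq_mul_inv_mul_add {K : Type*} [Field K] {φ c e g : K} (he : e ≠ 0)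
    (heg : e - g ≠ 0) (h : φ = g * (e⁻¹ * φ + (1 - e⁻¹) * c)) :
    φ = c * (e - 1) * g / (e - g) := by
  rw [eq_div_iff heg]
  field_simp at h
  linear_combination h

/-- Fixed point characterization via characteristic functions.  If a `ℤ₊`-valued
random variable `η̄` with `ρ̄ := P(η̄ > 0)` satisfies
`E[e^{ixη̄}] = exp{ρ̄(e^{ix} − 1)} E[e^{ix(η̄ − 1{η̄>0})}]` for all `x`, then its
characteristic function is that of the stationary M/D/1 queue whenever the
denominator does not vanish. -/
theorem charFun_fixed_point {Ω : Type*} [MeasureSpace Ω]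
    (μ : Measure Ω) [IsProbabilityMeasure μ]
    (η : Ω → ℕ) (hη : Measurable η)
    (ρ : ℝ) (hρ : ρ = (μ {ω | 0 < η ω}).toReal)
    (hfix : ∀ x : ℝ,
      ∫ ω, Complex.exp (Complex.I * x * (η ω : ℂ)) ∂μ
        = Complex.exp ((ρ : ℂ) * (Complex.exp (Complex.I * x) - 1)) *
          ∫ ω, Complex.exp (Complex.I * x * ((η ω : ℂ) - (if 0 < η ω then 1 else 0))) ∂μ) :
    ∀ x : ℝ,
      Complex.exp (Complex.I * x) - Complex.exp ((ρ : ℂ) * (Complex.exp (Complex.I * x) - 1)) ≠ 0 →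
      ∫ ω, Complex.exp (Complex.I * x * (η ω : ℂ)) ∂μ
        = (1 - (ρ : ℂ)) * (Complex.exp (Complex.I * x) - 1) *
            Complex.exp ((ρ : ℂ) * (Complex.exp (Complex.I * x) - 1)) /
          (Complex.exp (Complex.I * x)
            - Complex.exp ((ρ : ℂ) * (Complex.exp (Complex.I * x) - 1))) := by
  intro x hden
  have h := hfix x
  rw [integral_exp_I_mul_sub_ite_pos μ hη x, exp_neg, measureReal_def, ← hρ] at h
  exact eq_div_of_eq_mul_inv_mul_add (exp_ne_zero _) hden h
end

section
/- The RBB process preserves exchangeability: if the initial state η^L(0) ∈ ℤ₊^L has an exchangeable (symmetric) distribution, then η^L(t) is exchangeable for every t ∈ ℤ₊. -/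
open MeasureTheory
open scoped ENNReal

/-- Number of non-empty bins of a configuration. -/
def rbbTrials {L : ℕ} (a : Fin L → ℕ) : ℕ := ∑ j, if 0 < a j then 1 else 0

/-- Transition kernel of the RBB process: from `a`, take one ball from each
non-empty bin and reassign the removed balls by a uniform multinomial. -/
noncomputable def rbbKernel (L : ℕ) (a ξ : Fin L → ℕ) : ℝ≥0∞ :=
  ∑' b : Fin L → ℕ,
    if ξ = (fun k => a k - (if 0 < a k then 1 else 0) + b k)
        ∧ (∑ k, b k) = rbbTrials a then
      ENNReal.ofReal
        (((Nat.factorial (rbbTrials a) : ℝ) / ∏ k, (Nat.factorial (b k) : ℝ))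
          * (1 / (L : ℝ)) ^ rbbTrials a)
    else 0

lemma rbbTrials_perm {L : ℕ} (σ : Equiv.Perm (Fin L)) (a : Fin L → ℕ) :
    rbbTrials (fun k => a (σ k)) = rbbTrials a :=
  Fintype.sum_equiv σ _ _ (fun _ => rfl)

/-- precomposition equiv -/
def permComp {L : ℕ} (σ : Equiv.Perm (Fin L)) : (Fin L → ℕ) ≃ (Fin L → ℕ) where
  toFun b := fun k => b (σ k)
  invFun b := fun k => b (σ.symm k)
  left_inv b := by funext k; simp
  right_inv b := by funext k; simp

lemma rbbKernel_perm {L : ℕ} (σ : Equiv.Perm (Fin L)) (a ξ : Fin L → ℕ) :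
    rbbKernel L (fun k => a (σ k)) (fun k => ξ (σ k)) = rbbKernel L a ξ := by
  unfold rbbKernel
  rw [rbbTrials_perm]
  rw [← (permComp σ).tsum_eq]
  refine tsum_congr fun b => ?_
  have h1 : ((fun k => ξ (σ k)) = fun k => a (σ k) - (if 0 < a (σ k) then 1 else 0) + permComp σ b k)
      ↔ (ξ = fun k => a k - (if 0 < a k then 1 else 0) + b k) := by
    constructor
    · intro h; funext j
      have := congrFun h (σ.symm j)
      simpa [permComp] using this
    · intro h; funext k
      have := congrFun h (σ k)
      simpa [permComp] using this
  have h2 : (∑ k, permComp σ b k) = ∑ k, b k := Fintype.sum_equiv σ _ _ (fun _ => rfl)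
  have h3 : (∏ k, (Nat.factorial (permComp σ b k) : ℝ)) = ∏ k, (Nat.factorial (b k) : ℝ) :=
    Fintype.prod_equiv σ _ _ (fun _ => rfl)
  simp only [h1, h2, h3]

/-- The RBB process preserves exchangeability: if the initial state has an
exchangeable distribution, then so does the state at every time `t`. -/
theorem rbb_preserves_exchangeability {Ω : Type*} [MeasureSpace Ω]
    (μ : Measure Ω) [IsProbabilityMeasure μ]
    (L : ℕ) (hLpos : 0 < L)
    (η : ℕ → Ω → Fin L → ℕ) (hmeas : ∀ t, Measurable (η t))
    (htrans : ∀ t, ∀ a ξ : Fin L → ℕ,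
      μ {ω | η (t + 1) ω = ξ ∧ η t ω = a} = μ {ω | η t ω = a} * rbbKernel L a ξ)
    (hexch0 : ∀ σ : Equiv.Perm (Fin L),
      Measure.map (fun ω => fun k => η 0 ω (σ k)) μ = Measure.map (η 0) μ) :
    ∀ t, ∀ σ : Equiv.Perm (Fin L),
      Measure.map (fun ω => fun k => η t ω (σ k)) μ = Measure.map (η t) μ := by
  have hmeasσ : ∀ t (σ : Equiv.Perm (Fin L)), Measurable (fun ω => fun k => η t ω (σ k)) :=
    fun t σ => measurable_pi_lambda _ (fun k => (measurable_pi_apply (σ k)).comp (hmeas t))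
  -- singleton formulation
  have hmap : ∀ t (σ : Equiv.Perm (Fin L)) (ξ : Fin L → ℕ),
      Measure.map (fun ω => fun k => η t ω (σ k)) μ {ξ}
        = μ {ω | η t ω = fun k => ξ (σ.symm k)} := by
    intro t σ ξ
    rw [Measure.map_apply (hmeasσ t σ) (measurableSet_singleton ξ)]
    congr 1
    ext ω
    simp only [Set.mem_preimage, Set.mem_singleton_iff, Set.mem_setOf_eq]
    constructor
    · intro h; funext j; have := congrFun h (σ.symm j); simpa using this
    · intro h; funext k; have := congrFun h (σ k); simpa using this
  have hmapid : ∀ t (ξ : Fin L → ℕ),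
      Measure.map (η t) μ {ξ} = μ {ω | η t ω = ξ} := by
    intro t ξ
    rw [Measure.map_apply (hmeas t) (measurableSet_singleton ξ)]
    rfl
  intro t
  induction t with
  | zero => exact hexch0
  | succ t ih =>
    -- invariance of singleton probabilities at time t
    have pt_inv : ∀ (τ : Equiv.Perm (Fin L)) (a : Fin L → ℕ),
        μ {ω | η t ω = fun k => a (τ k)} = μ {ω | η t ω = a} := by
      intro τ a
      have := congrArg (fun m => m {a}) (ih τ.symm)
      simpa [hmap, hmapid, Equiv.symm_symm] using this
    -- decomposition of time t+1 singleton probability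
    have hdecomp : ∀ ξ : Fin L → ℕ,
        μ {ω | η (t+1) ω = ξ} = ∑' a : Fin L → ℕ, μ {ω | η t ω = a} * rbbKernel L a ξ := by
      intro ξ
      have hU : {ω | η (t+1) ω = ξ} = ⋃ a : Fin L → ℕ, {ω | η (t+1) ω = ξ ∧ η t ω = a} := by
        ext ω; simp [Set.mem_iUnion]
      rw [hU, measure_iUnion]
      · exact tsum_congr fun a => htrans t a ξ
      · intro a b hab
        simp only [Function.onFun, Set.disjoint_left]
        rintro ω ⟨-, h1⟩ ⟨-, h2⟩
        exact hab (h1 ▸ h2 ▸ rfl)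
      · intro a
        exact ((hmeas (t+1)) (measurableSet_singleton ξ)).inter
          ((hmeas t) (measurableSet_singleton a))
    intro σ
    refine Measure.ext_of_singleton fun ξ => ?_
    rw [hmap, hmapid, hdecomp, hdecomp]
    rw [← (permComp σ.symm).tsum_eq]
    refine tsum_congr fun a => ?_
    have hK : rbbKernel L (permComp σ.symm a) (fun k => ξ (σ.symm k))
        = rbbKernel L a ξ := rbbKernel_perm σ.symm a ξ
    have hp : (permComp σ.symm) a = fun k => a (σ.symm k) := rfl
    rw [hK, hp, pt_inv σ.symm a]
end

section
/- Under stationarity of the RBB process with N = rL balls in L bins, the covariance of occupation indicators satisfies Cov(w₁(η^L), w₂(η^L)) = −E[w₁(η^L)]² + 2E[w₁(η^L)]·((r+1)L − 1)/(L−1) − 2rL/(L−1), where w_j(η) = 1{η_j > 0}. -/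
open MeasureTheory
open scoped ENNReal

/-!
Test stationarity against `(L η_i)²`. From a configuration `a` with `W` non-empty bins, one RBB
step gives `η_i' = c + b_i` with `c = a_i - w_i(a)` and `b` multinomial with `W` trials and `L`
equally likely cells; the factorial moments `E (b_i)_k = (W)_k / L^k`, read off from the
derivatives of `(x + L - 1)^W` at `x = 1`, give
`E (L η_i')² = (L c)² + 2 L c W + W² + (L - 1) W`. Integrating against `ν` and using `w_i² = w_i`,
`η_i w_i = η_i` yields one linear relation between `E w_i`, `E η_i`, `E η_i W`, `E w_i W`, `E W²`
and `E W`. Exchangeability and `∑ η_k = N` reduce these to `p = E w_1` and `q = E w_1 w_2`: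
`L E η_i = N`, `E W = L p`, `L E η_i W = N E W`, `E W² = L E w_i W = L (p + (L - 1) q)`,
so that `(L - 1) q = 2 p (N + L - 1) - 2 N`.
-/

open Finset

open Polynomial in
theorem Nat.sum_multinomial_mul_descFactorial {L : ℕ} (j : Fin L) (W k : ℕ) :
    ∑ b ∈ piAntidiag univ W, multinomial univ b * (b j).descFactorial k
      = W.descFactorial k * L ^ (W - k) := by
  have hgen : ((X + C (L - 1 : ℕ)) ^ W : ℕ[X])
      = ∑ b ∈ piAntidiag univ W, C (multinomial univ b) * X ^ b j := by
    have hsum : ∑ i : Fin L, (if i = j then X else 1 : ℕ[X]) = X + C (L - 1 : ℕ) := by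
      rw [← add_sum_erase _ _ (mem_univ j), if_pos rfl,
        sum_congr rfl fun i hi => if_neg (ne_of_mem_erase hi)]
      simp [card_erase_of_mem]
    rw [← hsum, sum_pow_eq_sum_piAntidiag]
    refine sum_congr rfl fun b _ => ?_
    rw [prod_eq_single j (fun i _ hij => by simp [hij]) (by simp), if_pos rfl, ← C_eq_natCast,
      Nat.cast_id]
  have hL : 1 + (L - 1 : ℕ) = L := by have := j.pos; omega
  have := congrArg (fun p : ℕ[X] => (derivative^[k] p).eval 1) hgen
  simp only [iterate_derivative_X_add_pow, iterate_derivative_sum, iterate_derivative_C_mul,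
    iterate_derivative_X_pow_eq_smul, eval_finsetSum, eval_smul, eval_mul, eval_C, eval_pow,
    eval_add, eval_X, one_pow, hL, smul_eq_mul, mul_one] at this
  simpa [mul_comm] using this.symm

theorem sum_multinomial_div_mul_descFactorial {L : ℕ} (j : Fin L) (W k : ℕ) :
    ∑ b ∈ piAntidiag univ W, (Nat.multinomial univ b / L ^ W : ℝ) * (b j).descFactorial k
      = W.descFactorial k / L ^ k := by
  have hL : (L : ℝ) ≠ 0 := Nat.cast_ne_zero.mpr j.pos.ne'
  have h := congrArg (fun n : ℕ => (n : ℝ) / L ^ W) (Nat.sum_multinomial_mul_descFactorial j W k)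
  simp only [Nat.cast_sum, Nat.cast_mul, Nat.cast_pow, sum_div] at h
  simp only [div_mul_eq_mul_div, h]
  rcases le_or_gt k W with hkW | hWk
  · rw [pow_sub₀ _ hL hkW]
    field_simp
  · simp [Nat.descFactorial_eq_zero_iff_lt.mpr hWk]

theorem sum_multinomial_div_mul_sq {L : ℕ} (j : Fin L) (W : ℕ) (c : ℝ) :
    ∑ b ∈ piAntidiag univ W, (Nat.multinomial univ b / L ^ W : ℝ) * (L * (c + b j)) ^ 2
      = (L * c) ^ 2 + 2 * L * c * W + W ^ 2 + (L - 1) * W := by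
  have hL : (L : ℝ) ≠ 0 := Nat.cast_ne_zero.mpr j.pos.ne'
  set P : (Fin L → ℕ) → ℝ := fun b => Nat.multinomial univ b / L ^ W
  have hsq (n : ℕ) : (L * (c + n)) ^ 2 = (L * c) ^ 2 * n.descFactorial 0
      + 2 * L ^ 2 * c * n.descFactorial 1 + L ^ 2 * n.descFactorial 2
      + L ^ 2 * n.descFactorial 1 := by
    rw [Nat.cast_descFactorial_two]
    simp only [Nat.descFactorial_zero, Nat.descFactorial_one, Nat.cast_one]
    ring
  calc (∑ b ∈ piAntidiag univ W, P b * (L * (c + b j)) ^ 2)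
      = (L * c) ^ 2 * (∑ b ∈ piAntidiag univ W, P b * (b j).descFactorial 0)
        + 2 * L ^ 2 * c * (∑ b ∈ piAntidiag univ W, P b * (b j).descFactorial 1)
        + L ^ 2 * (∑ b ∈ piAntidiag univ W, P b * (b j).descFactorial 2)
        + L ^ 2 * (∑ b ∈ piAntidiag univ W, P b * (b j).descFactorial 1) := by
        simp only [mul_sum, ← sum_add_distrib, hsq]
        exact sum_congr rfl fun b _ => by ring
    _ = (L * c) ^ 2 + 2 * L * c * W + W ^ 2 + (L - 1) * W := by
        simp only [P, sum_multinomial_div_mul_descFactorial]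
        simp only [Nat.descFactorial_zero, Nat.descFactorial_one, Nat.cast_descFactorial_two]
        field_simp
        ring

-- The occupation indicator `w_j` of the paper.
def occupancy {L : ℕ} (j : Fin L) (η : Fin L → ℕ) : ℝ := if 0 < η j then 1 else 0

theorem occupancy_mul_self {L : ℕ} (j : Fin L) (η : Fin L → ℕ) :
    occupancy j η * occupancy j η = occupancy j η := by
  unfold occupancy; split_ifs <;> norm_num

theorem apply_mul_occupancy {L : ℕ} (j : Fin L) (η : Fin L → ℕ) :
    (η j : ℝ) * occupancy j η = η j := by
  unfold occupancy; split_ifs with h <;> simp_all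

theorem natCast_sub_occupancy {L : ℕ} (j : Fin L) (a : Fin L → ℕ) :
    ((a j - (if 0 < a j then 1 else 0) : ℕ) : ℝ) = a j - occupancy j a := by
  unfold occupancy
  split_ifs with h
  · rw [Nat.cast_sub h, Nat.cast_one]
  · simp

theorem natCast_rbbTrials {L : ℕ} (η : Fin L → ℕ) :
    (rbbTrials η : ℝ) = ∑ j, occupancy j η := by
  simp only [rbbTrials, occupancy, Nat.cast_sum, Nat.cast_ite, Nat.cast_one, Nat.cast_zero]

theorem rbbTrials_comp_perm {L : ℕ} (σ : Equiv.Perm (Fin L)) (η : Fin L → ℕ) :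
    rbbTrials (fun k => η (σ k)) = rbbTrials η :=
  Equiv.sum_comp σ fun k => if 0 < η k then 1 else 0

theorem rbbKernel_tsum_mul {L : ℕ} (a : Fin L → ℕ) (f : (Fin L → ℕ) → ℝ≥0∞) :
    ∑' ξ, rbbKernel L a ξ * f ξ
      = ∑ b ∈ piAntidiag univ (rbbTrials a),
          ENNReal.ofReal (Nat.multinomial univ b / L ^ rbbTrials a)
            * f (fun k => a k - (if 0 < a k then 1 else 0) + b k) := by
  have hcoeff {b : Fin L → ℕ} (hb : ∑ k, b k = rbbTrials a) :
      ((rbbTrials a).factorial / ∏ k, ((b k).factorial : ℝ)) * (1 / (L : ℝ)) ^ rbbTrials a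
        = Nat.multinomial univ b / L ^ rbbTrials a := by
    rw [Nat.multinomial, ← hb, Nat.cast_div (Nat.prod_factorial_dvd_factorial_sum _ _)
      (by positivity), Nat.cast_prod, one_div_pow, mul_one_div]
  set shift : (Fin L → ℕ) → Fin L → ℕ := fun b k => a k - (if 0 < a k then 1 else 0) + b k
  have hsingle (b : Fin L → ℕ) :
      ∑' ξ, (if ξ = shift b ∧ ∑ k, b k = rbbTrials a then
          ENNReal.ofReal (((rbbTrials a).factorial / ∏ k, ((b k).factorial : ℝ))
            * (1 / (L : ℝ)) ^ rbbTrials a) else 0) * f ξ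
        = if b ∈ piAntidiag univ (rbbTrials a) then
            ENNReal.ofReal (Nat.multinomial univ b / L ^ rbbTrials a) * f (shift b) else 0 := by
    rw [tsum_eq_single (shift b) fun ξ hξ => by simp [hξ]]
    by_cases hb : ∑ k, b k = rbbTrials a
    · rw [hcoeff hb]
      simp [hb]
    · simp [hb]
  simp only [rbbKernel, ← ENNReal.tsum_mul_right]
  rw [ENNReal.tsum_comm, tsum_congr hsingle, tsum_eq_sum fun b hb => if_neg hb]
  exact sum_congr rfl fun b hb => if_pos hb

theorem rbbKernel_tsum_mul_sq {L : ℕ} (j : Fin L) (a : Fin L → ℕ) :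
    ∑' ξ, rbbKernel L a ξ * ENNReal.ofReal ((L * ξ j) ^ 2)
      = ENNReal.ofReal ((L * (a j - occupancy j a)) ^ 2
          + 2 * L * (a j - occupancy j a) * rbbTrials a + rbbTrials a ^ 2
          + (L - 1) * rbbTrials a) := by
  rw [rbbKernel_tsum_mul, ← sum_multinomial_div_mul_sq j,
    ENNReal.ofReal_sum_of_nonneg fun b _ => by positivity]
  refine sum_congr rfl fun b _ => ?_
  rw [← ENNReal.ofReal_mul (by positivity), Nat.cast_add, natCast_sub_occupancy]

theorem lintegral_eq_lintegral_tsum_of_stationary {α : Type*} [MeasurableSpace α]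
    [MeasurableSingletonClass α] [Countable α] {ν : Measure α} {K : α → α → ℝ≥0∞}
    (hinv : ∀ ξ, ν {ξ} = ∑' a, ν {a} * K a ξ) (f : α → ℝ≥0∞) :
    ∫⁻ ξ, f ξ ∂ν = ∫⁻ a, ∑' ξ, K a ξ * f ξ ∂ν := by
  calc ∫⁻ ξ, f ξ ∂ν = ∑' ξ, (∑' a, ν {a} * K a ξ) * f ξ := by
        rw [lintegral_countable']
        exact tsum_congr fun ξ => by rw [mul_comm, hinv]
    _ = ∑' a, (∑' ξ, K a ξ * f ξ) * ν {a} := by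
        simp only [← ENNReal.tsum_mul_right]
        rw [ENNReal.tsum_comm]
        exact tsum_congr fun a => tsum_congr fun ξ => by ring
    _ = ∫⁻ a, ∑' ξ, K a ξ * f ξ ∂ν := (lintegral_countable' _).symm

-- Both sides are `toReal` of the same lintegral, so no integrability is needed.
theorem integral_eq_integral_of_stationary {α : Type*} [MeasurableSpace α]
    [MeasurableSingletonClass α] [Countable α] {ν : Measure α} {K : α → α → ℝ≥0∞}
    (hinv : ∀ ξ, ν {ξ} = ∑' a, ν {a} * K a ξ) {f g : α → ℝ} (hf : 0 ≤ f) (hg : 0 ≤ g)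
    (hKf : ∀ a, ∑' ξ, K a ξ * ENNReal.ofReal (f ξ) = ENNReal.ofReal (g a)) :
    ∫ ξ, f ξ ∂ν = ∫ a, g a ∂ν := by
  rw [integral_eq_lintegral_of_nonneg_ae (.of_forall hf)
      (measurable_of_countable f).aestronglyMeasurable,
    integral_eq_lintegral_of_nonneg_ae (.of_forall hg)
      (measurable_of_countable g).aestronglyMeasurable,
    lintegral_eq_lintegral_tsum_of_stationary hinv]
  simp only [hKf]

theorem integrable_of_ae_mem_finite {α : Type*} [MeasurableSpace α] [MeasurableSingletonClass α]
    [Countable α] {μ : Measure α} [IsFiniteMeasure μ] {s : Set α} (hs : s.Finite)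
    (hμ : ∀ᵐ x ∂μ, x ∈ s) (f : α → ℝ) : Integrable f μ :=
  .of_bound (measurable_of_countable f).aestronglyMeasurable (∑ x ∈ hs.toFinset, ‖f x‖)
    (hμ.mono fun _ hx => single_le_sum (f := fun x => ‖f x‖) (fun _ _ => norm_nonneg _)
      (hs.mem_toFinset.mpr hx))

section Exchangeable

variable {L : ℕ} {ν : Measure (Fin L → ℕ)}

theorem integral_comp_perm_of_exchangeable
    (hexch : ∀ σ : Equiv.Perm (Fin L), Measure.map (fun η => fun k => η (σ k)) ν = ν)
    (σ : Equiv.Perm (Fin L)) (f : (Fin L → ℕ) → ℝ) :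
    ∫ η, f (fun k => η (σ k)) ∂ν = ∫ η, f η ∂ν := by
  conv_rhs => rw [← hexch σ]
  rw [integral_map (measurable_of_countable _).aemeasurable
    (measurable_of_countable f).aestronglyMeasurable]

theorem integral_eq_of_exchangeable
    (hexch : ∀ σ : Equiv.Perm (Fin L), Measure.map (fun η => fun k => η (σ k)) ν = ν)
    {F : Fin L → (Fin L → ℕ) → ℝ}
    (hF : ∀ (σ : Equiv.Perm (Fin L)) i η, F i (fun k => η (σ k)) = F (σ i) η) (i j : Fin L) :
    ∫ η, F i η ∂ν = ∫ η, F j η ∂ν := by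
  rw [← integral_comp_perm_of_exchangeable hexch (Equiv.swap i j)]
  simp only [hF, Equiv.swap_apply_left]

theorem sum_integral_eq_of_exchangeable
    (hexch : ∀ σ : Equiv.Perm (Fin L), Measure.map (fun η => fun k => η (σ k)) ν = ν)
    {F : Fin L → (Fin L → ℕ) → ℝ}
    (hF : ∀ (σ : Equiv.Perm (Fin L)) i η, F i (fun k => η (σ k)) = F (σ i) η) (i : Fin L) :
    ∑ j, ∫ η, F j η ∂ν = L * ∫ η, F i η ∂ν := by
  simp [integral_eq_of_exchangeable hexch hF _ i]

theorem integral_occupancy_mul_eq_of_exchangeable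
    (hexch : ∀ σ : Equiv.Perm (Fin L), Measure.map (fun η => fun k => η (σ k)) ν = ν)
    {i j j' : Fin L} (hj : j ≠ i) (hj' : j' ≠ i) :
    ∫ η, occupancy i η * occupancy j η ∂ν = ∫ η, occupancy i η * occupancy j' η ∂ν := by
  rw [← integral_comp_perm_of_exchangeable hexch (Equiv.swap j j')]
  simp only [occupancy, Equiv.swap_apply_left, Equiv.swap_apply_of_ne_of_ne hj.symm hj'.symm]

end Exchangeable

section Moments

variable {L N : ℕ} {ν : Measure (Fin L → ℕ)}

theorem integrable_of_ae_sum_eq [IsFiniteMeasure ν] (hsum : ∀ᵐ η ∂ν, ∑ k, η k = N)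
    (f : (Fin L → ℕ) → ℝ) : Integrable f ν :=
  integrable_of_ae_mem_finite (s := {η | ∑ k, η k = N})
    ((piAntidiag univ N).finite_toSet.subset fun η hη => by simpa [mem_piAntidiag] using hη)
    hsum f

theorem integral_rbbTrials [IsFiniteMeasure ν]
    (hexch : ∀ σ : Equiv.Perm (Fin L), Measure.map (fun η => fun k => η (σ k)) ν = ν)
    (hsum : ∀ᵐ η ∂ν, ∑ k, η k = N) (i : Fin L) :
    ∫ η, (rbbTrials η : ℝ) ∂ν = L * ∫ η, occupancy i η ∂ν := by
  simp only [natCast_rbbTrials]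
  rw [integral_finsetSum _ fun j _ => integrable_of_ae_sum_eq hsum _]
  exact sum_integral_eq_of_exchangeable hexch (fun _ _ _ => rfl) i

theorem integral_rbbTrials_sq [IsFiniteMeasure ν]
    (hexch : ∀ σ : Equiv.Perm (Fin L), Measure.map (fun η => fun k => η (σ k)) ν = ν)
    (hsum : ∀ᵐ η ∂ν, ∑ k, η k = N) (i : Fin L) :
    ∫ η, (rbbTrials η : ℝ) ^ 2 ∂ν = L * ∫ η, occupancy i η * rbbTrials η ∂ν := by
  simp only [sq]
  conv_lhs => enter [2, η, 1]; rw [natCast_rbbTrials]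
  simp only [sum_mul]
  rw [integral_finsetSum _ fun j _ => integrable_of_ae_sum_eq hsum _]
  exact sum_integral_eq_of_exchangeable hexch
    (fun σ _ η => by simp only [rbbTrials_comp_perm]; rfl) i

theorem integral_occupancy_mul_rbbTrials [IsFiniteMeasure ν]
    (hexch : ∀ σ : Equiv.Perm (Fin L), Measure.map (fun η => fun k => η (σ k)) ν = ν)
    (hsum : ∀ᵐ η ∂ν, ∑ k, η k = N) {i j : Fin L} (hij : j ≠ i) :
    ∫ η, occupancy i η * rbbTrials η ∂ν
      = ∫ η, occupancy i η ∂ν + (L - 1) * ∫ η, occupancy i η * occupancy j η ∂ν := by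
  simp only [natCast_rbbTrials, mul_sum]
  rw [integral_finsetSum _ fun j _ => integrable_of_ae_sum_eq hsum _,
    ← add_sum_erase _ _ (mem_univ i),
    sum_congr rfl fun k hk =>
      integral_occupancy_mul_eq_of_exchangeable hexch (ne_of_mem_erase hk) hij]
  simp [occupancy_mul_self, card_erase_of_mem, Nat.cast_sub (Fin.pos i)]

theorem integral_apply [IsProbabilityMeasure ν]
    (hexch : ∀ σ : Equiv.Perm (Fin L), Measure.map (fun η => fun k => η (σ k)) ν = ν)
    (hsum : ∀ᵐ η ∂ν, ∑ k, η k = N) (i : Fin L) :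
    L * ∫ η, (η i : ℝ) ∂ν = N := by
  rw [← sum_integral_eq_of_exchangeable hexch (F := fun j η => (η j : ℝ)) (fun _ _ _ => rfl),
    ← integral_finsetSum _ fun j _ => integrable_of_ae_sum_eq hsum _]
  rw [integral_congr_ae (g := fun _ => (N : ℝ))
    (hsum.mono fun η hη => by simp only [← Nat.cast_sum, hη])]
  simp

theorem integral_apply_mul_rbbTrials [IsFiniteMeasure ν]
    (hexch : ∀ σ : Equiv.Perm (Fin L), Measure.map (fun η => fun k => η (σ k)) ν = ν)
    (hsum : ∀ᵐ η ∂ν, ∑ k, η k = N) (i : Fin L) :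
    L * ∫ η, (η i : ℝ) * rbbTrials η ∂ν = N * ∫ η, (rbbTrials η : ℝ) ∂ν := by
  rw [← sum_integral_eq_of_exchangeable hexch (F := fun j η => (η j : ℝ) * rbbTrials η)
      (fun σ _ η => by simp only [rbbTrials_comp_perm]),
    ← integral_finsetSum _ fun j _ => integrable_of_ae_sum_eq hsum _, ← integral_const_mul]
  refine integral_congr_ae (hsum.mono fun η hη => ?_)
  simp only [← sum_mul, ← Nat.cast_sum, hη]

end Moments

theorem rbb_second_moment_balance {L N : ℕ} {ν : Measure (Fin L → ℕ)} [IsFiniteMeasure ν]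
    (hinv : ∀ ξ : Fin L → ℕ, ν {ξ} = ∑' a : Fin L → ℕ, ν {a} * rbbKernel L a ξ)
    (hsum : ∀ᵐ η ∂ν, ∑ k, η k = N) (i : Fin L) :
    L ^ 2 * (∫ η, occupancy i η ∂ν - 2 * ∫ η, (η i : ℝ) ∂ν)
      + 2 * L * (∫ η, (η i : ℝ) * rbbTrials η ∂ν - ∫ η, occupancy i η * rbbTrials η ∂ν)
      + ∫ η, (rbbTrials η : ℝ) ^ 2 ∂ν + (L - 1) * ∫ η, (rbbTrials η : ℝ) ∂ν = 0 := by
  have hL : (0 : ℝ) ≤ L - 1 := sub_nonneg.mpr (Nat.one_le_cast.mpr i.pos)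
  have hint := integrable_of_ae_sum_eq hsum
  have hstat := integral_eq_integral_of_stationary hinv (fun η => by positivity)
    (fun a => by
      have hc : 0 ≤ (a i : ℝ) - occupancy i a := natCast_sub_occupancy i a ▸ Nat.cast_nonneg _
      set c := (a i : ℝ) - occupancy i a
      positivity) (rbbKernel_tsum_mul_sq i)
  have hexpand (η : Fin L → ℕ) :
      (L * (η i - occupancy i η)) ^ 2 + 2 * L * (η i - occupancy i η) * rbbTrials η
        + rbbTrials η ^ 2 + (L - 1) * rbbTrials η
      = (L * η i) ^ 2 + (L ^ 2 * (occupancy i η - 2 * η i)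
        + 2 * L * ((η i : ℝ) * rbbTrials η - occupancy i η * rbbTrials η)
        + (rbbTrials η : ℝ) ^ 2 + (L - 1) * rbbTrials η) := by
    linear_combination
      (L : ℝ) ^ 2 * occupancy_mul_self i η - 2 * (L : ℝ) ^ 2 * apply_mul_occupancy i η
  simp only [hexpand] at hstat
  rw [integral_add (hint _) (hint _)] at hstat
  simpa [integral_add, integral_sub, integral_const_mul, hint] using hstat

theorem rbb_occupancy_pair_identity {L N : ℕ} {ν : Measure (Fin L → ℕ)} [IsProbabilityMeasure ν]
    (hinv : ∀ ξ : Fin L → ℕ, ν {ξ} = ∑' a : Fin L → ℕ, ν {a} * rbbKernel L a ξ)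
    (hexch : ∀ σ : Equiv.Perm (Fin L), Measure.map (fun η => fun k => η (σ k)) ν = ν)
    (hsum : ∀ᵐ η ∂ν, ∑ k, η k = N) {i j : Fin L} (hij : j ≠ i) :
    (L - 1) * ∫ η, occupancy i η * occupancy j η ∂ν
      = 2 * (∫ η, occupancy i η ∂ν) * (N + L - 1) - 2 * N := by
  have hL : (L : ℝ) ≠ 0 := Nat.cast_ne_zero.mpr i.pos.ne'
  have hbalance := rbb_second_moment_balance hinv hsum i
  have hW := integral_rbbTrials hexch hsum i
  have hW2 := integral_rbbTrials_sq hexch hsum i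
  have hwW := integral_occupancy_mul_rbbTrials hexch hsum hij
  have hx := integral_apply hexch hsum i
  have hxW := integral_apply_mul_rbbTrials hexch hsum i
  refine mul_left_cancel₀ hL ?_
  linear_combination -hbalance + hW2 - 2 * (L : ℝ) * hx + 2 * hxW + (2 * N + L - 1) * hW - L * hwW

/-- Under stationarity of the RBB process with `N = rL` balls in `L` bins, the
covariance of the occupation indicators `w_j = 1{η_j > 0}` satisfies
`Cov(w₁,w₂) = −E[w₁]² + 2E[w₁]((r+1)L − 1)/(L−1) − 2rL/(L−1)`. -/
theorem rbb_stationary_covariance (L N : ℕ) (hL : 2 ≤ L) (r : ℝ)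
    (hN : (N : ℝ) = r * L)
    (ν : Measure (Fin L → ℕ)) [IsProbabilityMeasure ν]
    (hsupp : ν {η | (∑ k, η k) = N} = 1)
    (hinv : ∀ ξ : Fin L → ℕ, ν {ξ} = ∑' a : Fin L → ℕ, ν {a} * rbbKernel L a ξ)
    (hexch : ∀ σ : Equiv.Perm (Fin L),
      Measure.map (fun η => fun k => η (σ k)) ν = ν) :
    (∫ η, (if 0 < η ⟨0, by omega⟩ then (1 : ℝ) else 0)
          * (if 0 < η ⟨1, by omega⟩ then (1 : ℝ) else 0) ∂ν)
      - (∫ η, (if 0 < η ⟨0, by omega⟩ then (1 : ℝ) else 0) ∂ν)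
        * (∫ η, (if 0 < η ⟨1, by omega⟩ then (1 : ℝ) else 0) ∂ν)
      = -(∫ η, (if 0 < η ⟨0, by omega⟩ then (1 : ℝ) else 0) ∂ν) ^ 2
        + 2 * (∫ η, (if 0 < η ⟨0, by omega⟩ then (1 : ℝ) else 0) ∂ν)
            * (((r + 1) * L - 1) / ((L : ℝ) - 1))
        - 2 * r * (L : ℝ) / ((L : ℝ) - 1) := by
  set i : Fin L := ⟨0, by omega⟩
  set j : Fin L := ⟨1, by omega⟩
  have hsum : ∀ᵐ η ∂ν, ∑ k, η k = N := (ae_iff_prob_eq_one (measurable_of_countable _)).mpr hsupp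
  have hpair := rbb_occupancy_pair_identity hinv hexch hsum (i := i) (j := j) (by simp [i, j])
  have hj := integral_eq_of_exchangeable hexch (F := occupancy) (fun _ _ _ => rfl) j i
  have hL1 : (L : ℝ) - 1 ≠ 0 := by
    have : (2 : ℝ) ≤ L := by exact_mod_cast hL
    linarith
  simp only [show ∀ k (η : Fin L → ℕ), (if 0 < η k then (1 : ℝ) else 0) = occupancy k η
    from fun _ _ => rfl, hj]
  field_simp
  linear_combination hpair + 2 * (∫ η, occupancy i η ∂ν - 1) * hN
end
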